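/- (Omitting types.) Let n ≥ 2, let A be a countable transposition algebra of dimension n, let a ∈ A be nonzero, and let X ⊆ A be such that 0 is the greatest lower bound of X. Then there is a homomorphism h : A → 𝒫(Perm(Fin n)) (preserving ⊓ as ∩, complement as complement in Perm(Fin n), 1 as Perm(Fin n), and with h(s_{ij}x) = {ξ : ξ ∘ [i,j] ∈ h(x)}) such that h(a) ≠ ∅ and ⋂_{x ∈ X} h(x) = ∅. -/

import Mathlib

/-!
The relations `Σ_n` present the symmetric group on its transpositions, so `swap i j ↦ s i j`
extends to a monoid hom `G : Perm (Fin n) →* (A ≃o A)`; by induction on the index type,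
writing a permutation of `Option α` uniquely as `swap none p * τ.optionCongr`, it suffices to
check left multiplication by the transpositions through `none`. Each `G ξ` is a Boolean
automorphism, so `⊥` is still the meet of `G ξ '' X`, and since `Perm (Fin n)` is finite, `a`
can be shrunk to a nonzero `b` that is disjoint from some `G ξ x`, `x ∈ X`, for every `ξ`.
For a prime ideal `J` avoiding `b`, the map `h x = {ξ | G ξ x ∉ J}` is the required
homomorphism.
-/

/-- A transposition algebra with dimensions indexed by `ι`: a Boolean algebra with unary
operations `s i j` (for `i ≠ j`) satisfying the equation set `Σ_n`. -/
structure TranspositionAlgebra (ι : Type*) (A : Type*) [BooleanAlgebra A] where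
  s : ι → ι → A → A
  map_inf : ∀ i j : ι, i ≠ j → ∀ x y : A, s i j (x ⊓ y) = s i j x ⊓ s i j y
  map_compl : ∀ i j : ι, i ≠ j → ∀ x : A, s i j xᶜ = (s i j x)ᶜ
  symm : ∀ i j : ι, i ≠ j → s i j = s j i
  invol : ∀ i j : ι, i ≠ j → ∀ x : A, s i j (s i j x) = x
  comm : ∀ i j k l : ι, i ≠ j → k ≠ l → i ≠ k → i ≠ l → j ≠ k → j ≠ l →
    ∀ x : A, s i j (s k l x) = s k l (s i j x)
  braid : ∀ i j k : ι, i ≠ j → j ≠ k → i ≠ k →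
    ∀ x : A, s i j (s j k (s i j x)) = s i k x

open Equiv

section SwapFamily

variable {ι H : Type*} [Monoid H]

/-- Commutation of disjoint transpositions is a consequence of these relations. -/
structure IsSwapFamily (t : ι → ι → H) : Prop where
  mul_self : ∀ ⦃i j⦄, i ≠ j → t i j * t i j = 1
  symm : ∀ ⦃i j⦄, i ≠ j → t i j = t j i
  braid : ∀ ⦃i j k⦄, i ≠ j → j ≠ k → i ≠ k → t i j * t j k * t i j = t i k

namespace IsSwapFamily

variable {t : ι → ι → H}

theorem comp {κ : Type*} {f : κ → ι} (ht : IsSwapFamily t) (hf : Function.Injective f) :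
    IsSwapFamily (fun a b ↦ t (f a) (f b)) :=
  ⟨fun _ _ h ↦ ht.mul_self (hf.ne h), fun _ _ h ↦ ht.symm (hf.ne h),
    fun _ _ _ h₁ h₂ h₃ ↦ ht.braid (hf.ne h₁) (hf.ne h₂) (hf.ne h₃)⟩

theorem mul_eq_mul_of_ne {i j k : ι} (ht : IsSwapFamily t) (hij : i ≠ j) (hjk : j ≠ k)
    (hik : i ≠ k) : t i j * t j k = t i k * t i j := by
  rw [← ht.braid hij hjk hik, mul_assoc, ht.mul_self hij, mul_one]

end IsSwapFamily

variable [DecidableEq ι]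

theorem exists_monoidHom_of_map_swap_mul [Finite ι] {t : ι → ι → H} {F : Perm ι → H}
    (h1 : F 1 = 1) (hF : ∀ i j, i ≠ j → ∀ σ, F (swap i j * σ) = t i j * F σ) :
    ∃ G : Perm ι →* H, ∀ i j, i ≠ j → G (swap i j) = t i j := by
  have hmul : ∀ σ τ, F (σ * τ) = F σ * F τ := by
    intro σ τ
    induction σ using Perm.swap_induction_on with
    | one => rw [one_mul, h1, one_mul]
    | swap_mul σ i j hij ih => rw [mul_assoc, hF i j hij, hF i j hij, ih, mul_assoc]
  exact ⟨⟨⟨F, h1⟩, hmul⟩, fun i j hij ↦ by simpa [h1] using hF i j hij 1⟩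

namespace IsSwapFamily

variable {t : ι → ι → H}

theorem map_swap_mul_of_basepoint {F : Perm ι → H} (ht : IsSwapFamily t) (c : ι)
    (hF : ∀ b, c ≠ b → ∀ σ, F (swap c b * σ) = t c b * F σ) :
    ∀ i j, i ≠ j → ∀ σ, F (swap i j * σ) = t i j * F σ := by
  have hne_c : ∀ i j, i ≠ j → j ≠ c → ∀ σ, F (swap i j * σ) = t i j * F σ := by
    intro i j hij hjc σ
    rcases eq_or_ne i c with rfl | hic
    · exact hF j hjc.symm σ
    rw [← swap_mul_swap_mul_swap hjc hij.symm, swap_comm j c, ← ht.braid hic hjc.symm hij,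
      ht.symm hic]
    simp only [mul_assoc, hF _ hic.symm, hF _ hjc.symm]
  intro i j hij σ
  rcases eq_or_ne j c with rfl | hjc
  · rw [swap_comm, ht.symm hij]
    exact hne_c j i hij.symm hij σ
  · exact hne_c i j hij hjc σ

theorem exists_map_swap_none_mul {α : Type*} [DecidableEq α] {t : Option α → Option α → H}
    (ht : IsSwapFamily t) (F' : Perm α →* H)
    (hF' : ∀ a b, a ≠ b → F' (swap a b) = t (some a) (some b)) :
    ∃ F : Perm (Option α) → H,
      F 1 = 1 ∧ ∀ b, none ≠ b → ∀ σ, F (swap none b * σ) = t none b * F σ := by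
  let u : Option α → H := fun p ↦ p.elim 1 fun c ↦ t none (some c)
  let F : Perm (Option α) → H := fun σ ↦ u (σ none) * F' (removeNone σ)
  have hF : ∀ p τ, F (swap none p * τ.optionCongr) = u p * F' τ := by
    intro p τ
    have h := Perm.decomposeOption.apply_symm_apply (p, τ)
    simp only [Perm.decomposeOption_apply, Perm.decomposeOption_symm_apply, Prod.ext_iff] at h
    simp only [F, h]
  have hF_none : ∀ τ, F τ.optionCongr = F' τ := by
    intro τ
    simpa [u, ← Perm.one_def] using hF none τ
  refine ⟨F, by simpa using hF_none 1, ?_⟩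
  rintro (_ | b) hb σ
  · exact absurd rfl hb
  obtain ⟨⟨_ | c, τ⟩, rfl⟩ := Perm.decomposeOption.symm.surjective σ
  · simp only [Perm.decomposeOption_symm_apply, swap_self, ← Perm.one_def, one_mul, hF_none, hF]
    rfl
  simp only [Perm.decomposeOption_symm_apply, hF]
  rcases eq_or_ne c b with rfl | hcb
  · rw [swap_mul_self_mul, hF_none, ← mul_assoc, show u (some c) = t none (some c) from rfl,
      ht.mul_self hb, one_mul]
  · have hswap : swap none (some b) * swap none (some c) =
        swap none (some c) * swap (some c) (some b) := by
      rw [swap_mul_eq_mul_swap, swap_inv, swap_apply_left,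
        swap_apply_of_ne_of_ne (Option.some_ne_none b) (by simpa using hcb.symm)]
    have hcongr : (swap c b * τ).optionCongr = swap (some c) (some b) * τ.optionCongr := by
      rw [Perm.mul_def, Perm.mul_def, optionCongr_trans, optionCongr_swap]
    rw [← mul_assoc, hswap, mul_assoc, ← hcongr, hF, map_mul, hF' c b hcb]
    simp only [u, Option.elim_some, ← mul_assoc]
    rw [ht.mul_eq_mul_of_ne (Option.some_ne_none c).symm (by simpa using hcb) hb]

theorem exists_monoidHom [Finite ι] (ht : IsSwapFamily t) :
    ∃ G : Perm ι →* H, ∀ i j, i ≠ j → G (swap i j) = t i j := by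
  refine Finite.induction_empty_option ?_ ?_ ?_ ι t ht (P := fun ι ↦
    ∀ [DecidableEq ι] (t : ι → ι → H), IsSwapFamily t →
      ∃ G : Perm ι →* H, ∀ i j, i ≠ j → G (swap i j) = t i j)
  · intro α β e hα _ t ht
    classical
    obtain ⟨G, hG⟩ := hα _ (ht.comp e.injective)
    refine ⟨G.comp e.symm.permCongrHom.toMonoidHom, fun i j hij ↦ ?_⟩
    simp [permCongr_def, hG _ _ (e.symm.injective.ne hij)]
  · exact fun _ _ ↦ ⟨1, fun i ↦ i.elim⟩
  · intro α _ hα inst t ht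
    classical
    obtain rfl : inst = fun a b ↦ a.instDecidableEq b := Subsingleton.elim _ _
    obtain ⟨F', hF'⟩ := hα _ (ht.comp (Option.some_injective α))
    obtain ⟨F, h1, hF⟩ := ht.exists_map_swap_none_mul F' hF'
    exact exists_monoidHom_of_map_swap_mul h1 (ht.map_swap_mul_of_basepoint none hF)

end IsSwapFamily

end SwapFamily

namespace TranspositionAlgebra

variable {ι A : Type*} [BooleanAlgebra A] (M : TranspositionAlgebra ι A)

theorem monotone_s {i j : ι} (hij : i ≠ j) : Monotone (M.s i j) := fun x y hxy ↦ by
  rw [← inf_eq_left.2 hxy, M.map_inf i j hij]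
  exact inf_le_right

def sOrderIso {i j : ι} (hij : i ≠ j) : A ≃o A :=
  (Function.Involutive.toPerm _ (M.invol i j hij)).toOrderIso (M.monotone_s hij)
    (M.monotone_s hij)

variable [DecidableEq ι]

/-- `s i i` is unconstrained, so the diagonal is sent to `1`. -/
def swapOrderIso (i j : ι) : A ≃o A :=
  if hij : i = j then 1 else M.sOrderIso hij

theorem swapOrderIso_apply {i j : ι} (hij : i ≠ j) (x : A) :
    M.swapOrderIso i j x = M.s i j x := by
  rw [swapOrderIso, dif_neg hij]
  rfl

theorem isSwapFamily_swapOrderIso : IsSwapFamily M.swapOrderIso where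
  mul_self i j hij := by
    ext x
    simp [RelIso.mul_apply, M.swapOrderIso_apply hij, M.invol i j hij]
  symm i j hij := by
    ext x
    simp [M.swapOrderIso_apply hij, M.swapOrderIso_apply hij.symm, M.symm i j hij]
  braid i j k hij hjk hik := by
    ext x
    simp [RelIso.mul_apply, M.swapOrderIso_apply, hij, hjk, hik, M.braid i j k hij hjk hik]

theorem exists_monoidHom [Finite ι] :
    ∃ G : Perm ι →* (A ≃o A), ∀ i j, i ≠ j → ∀ x, G (swap i j) x = M.s i j x := by
  obtain ⟨G, hG⟩ := M.isSwapFamily_swapOrderIso.exists_monoidHom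
  exact ⟨G, fun i j hij x ↦ by rw [hG i j hij, M.swapOrderIso_apply hij]⟩

end TranspositionAlgebra

theorem exists_le_ne_bot_disjoint_of_isGLB_bot {A κ : Type*} [BooleanAlgebra A] [Finite κ]
    {Y : κ → Set A} (hY : ∀ k, IsGLB (Y k) ⊥) {a : A} (ha : a ≠ ⊥) :
    ∃ b ≤ a, b ≠ ⊥ ∧ ∀ k, ∃ y ∈ Y k, Disjoint b y := by
  classical
  cases nonempty_fintype κ
  suffices ∀ s : Finset κ, ∃ b ≤ a, b ≠ ⊥ ∧ ∀ k ∈ s, ∃ y ∈ Y k, Disjoint b y by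
    simpa using this Finset.univ
  intro s
  induction s using Finset.induction_on with
  | empty => exact ⟨a, le_rfl, ha, by simp⟩
  | insert k s _ ih =>
    obtain ⟨b, hba, hb, hbs⟩ := ih
    obtain ⟨y, hy, hby⟩ : ∃ y ∈ Y k, ¬b ≤ y := by
      by_contra! h
      exact hb (le_bot_iff.1 ((hY k).2 h))
    refine ⟨b \ y, sdiff_le.trans hba, sdiff_eq_bot_iff.not.2 hby, fun l hl ↦ ?_⟩
    rcases Finset.mem_insert.1 hl with rfl | hl
    · exact ⟨y, hy, disjoint_sdiff_self_left⟩
    · obtain ⟨z, hz, hbz⟩ := hbs l hl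
      exact ⟨z, hz, hbz.mono_left sdiff_le⟩

namespace Order.Ideal

theorem exists_isPrime_notMem {P : Type*} [DistribLattice P] [OrderBot P] {b : P} (hb : b ≠ ⊥) :
    ∃ J : Ideal P, J.IsPrime ∧ b ∉ J := by
  have hdisj : Disjoint (PFilter.principal b : Set P) (principal ⊥ : Ideal P) :=
    Set.disjoint_left.2 fun x hbx hx ↦
      hb (le_bot_iff.1 ((PFilter.mem_principal.1 hbx).trans (mem_principal.1 hx)))
  obtain ⟨J, hJ, -, hJb⟩ := DistribLattice.prime_ideal_of_disjoint_filter_ideal hdisj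
  exact ⟨J, hJ, Set.disjoint_left.1 hJb (PFilter.mem_principal.2 le_rfl)⟩

variable {P : Type*} [BooleanAlgebra P] {J : Ideal P} {x y : P}

theorem IsPrime.inf_mem_iff (hJ : J.IsPrime) : x ⊓ y ∈ J ↔ x ∈ J ∨ y ∈ J :=
  ⟨hJ.mem_or_mem, fun h ↦ h.elim (J.lower inf_le_left) (J.lower inf_le_right)⟩

theorem IsPrime.compl_mem_iff (hJ : J.IsPrime) : xᶜ ∈ J ↔ x ∉ J :=
  ⟨hJ.toIsProper.notMem_of_compl_mem, hJ.compl_mem_of_notMem⟩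

end Order.Ideal

theorem transpositionAlgebra_omitting_types_general (n : ℕ)
    {A : Type*} [BooleanAlgebra A] (M : TranspositionAlgebra (Fin n) A)
    (a : A) (ha : a ≠ ⊥) (X : Set A) (hX : IsGLB X ⊥) :
    ∃ h : A → Set (Equiv.Perm (Fin n)),
      h a ≠ ∅ ∧
      (∀ x y : A, h (x ⊓ y) = h x ∩ h y) ∧
      (∀ x : A, h xᶜ = Set.univ \ h x) ∧
      h ⊤ = Set.univ ∧
      (∀ i j : Fin n, i ≠ j → ∀ x : A,
        h (M.s i j x) = {ξ : Equiv.Perm (Fin n) | ξ * Equiv.swap i j ∈ h x}) ∧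
      (⋂ x ∈ X, h x) = ∅ := by
  obtain ⟨G, hG⟩ := M.exists_monoidHom
  obtain ⟨b, hba, hb, hbX⟩ := exists_le_ne_bot_disjoint_of_isGLB_bot
    (Y := fun ξ ↦ G ξ '' X) (fun ξ ↦ by simpa using (G ξ).isGLB_image'.2 hX) ha
  obtain ⟨J, hJ, hbJ⟩ := Order.Ideal.exists_isPrime_notMem hb
  refine ⟨fun x ↦ {ξ | G ξ x ∉ J}, ?_, ?_, ?_, ?_, ?_, ?_⟩
  · exact Set.nonempty_iff_ne_empty.1 ⟨1, fun haJ ↦ hbJ (J.lower hba (by simpa using haJ))⟩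
  · intro x y
    ext ξ
    simp [hJ.inf_mem_iff]
  · intro x
    ext ξ
    simp [hJ.compl_mem_iff]
  · ext ξ
    simp [hJ.toIsProper.top_notMem]
  · intro i j hij x
    ext ξ
    simp [RelIso.mul_apply, hG i j hij]
  · refine Set.eq_empty_iff_forall_notMem.2 fun ξ hξ ↦ ?_
    obtain ⟨_, ⟨x, hx, rfl⟩, hbx⟩ := hbX ξ
    exact hbJ (J.lower hbx.le_compl_right (hJ.compl_mem_iff.2 (Set.mem_iInter₂.1 hξ x hx)))

/-- omitting types: for a countable transposition algebra `A` of dimension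
`n ≥ 2`, a nonzero `a ∈ A` and a set `X ⊆ A` whose greatest lower bound is `0`, there is a
homomorphism `h : A → 𝒫(Perm(Fin n))` with `h a ≠ ∅` that carries the meet of `X` to the
empty intersection: `⋂_{x ∈ X} h x = ∅`. -/
theorem transpositionAlgebra_omitting_types (n : ℕ) (hn : 2 ≤ n)
    {A : Type*} [BooleanAlgebra A] [Countable A] (M : TranspositionAlgebra (Fin n) A)
    (a : A) (ha : a ≠ ⊥) (X : Set A) (hX : IsGLB X ⊥) :
    ∃ h : A → Set (Equiv.Perm (Fin n)),
      h a ≠ ∅ ∧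
      (∀ x y : A, h (x ⊓ y) = h x ∩ h y) ∧
      (∀ x : A, h xᶜ = Set.univ \ h x) ∧
      h ⊤ = Set.univ ∧
      (∀ i j : Fin n, i ≠ j → ∀ x : A,
        h (M.s i j x) = {ξ : Equiv.Perm (Fin n) | ξ * Equiv.swap i j ∈ h x}) ∧
      (⋂ x ∈ X, h x) = ∅ :=
  transpositionAlgebra_omitting_types_general n M a ha X hX
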